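/- Let n ≥ 2, let N be a positive divisor of n, and let φ be a finite-order automorphism of the one-sided shift on (Fin n)^ℕ. Then every point of (Fin n)^ℕ has orbit length exactly N under φ if and only if every σ-periodic point (i.e. every x with σ^[p] x = x for some p ≥ 1) has orbit length exactly N under φ. -/
import Mathlib


/-- The one-sided shift map on `(Fin n)^ℕ`: `(σ x) i = x (i+1)`. -/
def shiftMap (n : ℕ) : (ℕ → Fin n) → (ℕ → Fin n) := fun x i => x (i + 1)

/-- `b` has orbit length exactly `N` under `f`: `N` is the least `L ≥ 1` with `f^[L] b = b`. -/
def HasOrbitLen {β : Type*} (f : β → β) (b : β) (N : ℕ) : Prop :=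
  IsLeast {L : ℕ | 0 < L ∧ f^[L] b = b} N

/-- An automorphism of the one-sided shift: a homeomorphism commuting with the shift. -/
def IsShiftAut (n : ℕ) (φ : (ℕ → Fin n) ≃ₜ (ℕ → Fin n)) : Prop :=
  ⇑φ ∘ shiftMap n = shiftMap n ∘ ⇑φ

/-- `φ` has finite order. -/
def FiniteOrderAut (n : ℕ) (φ : (ℕ → Fin n) ≃ₜ (ℕ → Fin n)) : Prop :=
  ∃ m : ℕ, 0 < m ∧ (⇑φ)^[m] = id

/-- Extension of the transition function of an automaton to words (letters read in order). -/
def transStar {n : ℕ} {Q : Type*} (π : Fin n → Q → Q) : List (Fin n) → Q → Q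
  | [], q => q
  | x :: w, q => transStar π w (π x q)

/-- The automaton `(Q, π)` is synchronizing at level `k` with synchronizing map `s`. -/
def SyncAtLevelWith {n : ℕ} {Q : Type*} (π : Fin n → Q → Q) (k : ℕ)
    (s : List (Fin n) → Q) : Prop :=
  ∀ w : List (Fin n), w.length = k → ∀ q : Q, transStar π w q = s w

/-- The synchronizing map `s` at level `k` is surjective (the automaton is core). -/
def CoreAt {n : ℕ} {Q : Type*} (s : List (Fin n) → Q) (k : ℕ) : Prop :=
  ∀ q : Q, ∃ w : List (Fin n), w.length = k ∧ s w = q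

/-- An automorphism of the underlying digraph of the automaton `(Q, π)`. -/
structure DigraphAut {Q : Type*} (n : ℕ) (π : Fin n → Q → Q) where
  α : Q ≃ Q
  lab : Q → Equiv.Perm (Fin n)
  compat : ∀ (x : Fin n) (q : Q), π (lab q x) (α q) = α (π x q)

/-- Action of a digraph automorphism on the edge set `Q × Fin n`. -/
def edgeMap {Q : Type*} {n : ℕ} {π : Fin n → Q → Q} (Φ : DigraphAut n π) :
    Q × Fin n → Q × Fin n :=
  fun e => (Φ.α e.1, Φ.lab e.1 e.2)

/-- The output word map `Λ` of a digraph automorphism. -/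
def outWord {Q : Type*} {n : ℕ} (π : Fin n → Q → Q) (lab : Q → Equiv.Perm (Fin n)) :
    List (Fin n) → Q → List (Fin n)
  | [], _ => []
  | x :: w, q => lab q x :: outWord π lab w (π x q)

/-- Action of a digraph automorphism on based circuits: `(q, w) ↦ (α q, Λ(w, q))`. -/
def circMap {Q : Type*} {n : ℕ} {π : Fin n → Q → Q} (Φ : DigraphAut n π) :
    Q × List (Fin n) → Q × List (Fin n) :=
  fun c => (Φ.α c.1, outWord π Φ.lab c.2 c.1)

/-- `(q, w)` is a based circuit: `w` nonempty and `π*(w, q) = q`. -/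
def IsBasedCircuit {Q : Type*} {n : ℕ} (π : Fin n → Q → Q) (c : Q × List (Fin n)) : Prop :=
  c.2 ≠ [] ∧ transStar π c.2 c.1 = c.1

/-- The sliding block code induced by an automaton synchronizing at level `k`
with synchronizing map `s` and digraph automorphism with labelling `lab`:
`(F x) i = lab q_i (x i)` where `q_i = s [x(i+k), x(i+k-1), …, x(i+1)]`. -/
def inducedMap {Q : Type*} {n : ℕ} (k : ℕ) (s : List (Fin n) → Q)
    (lab : Q → Equiv.Perm (Fin n)) : (ℕ → Fin n) → (ℕ → Fin n) :=
  fun x i => lab (s (List.ofFn fun j : Fin k => x (i + k - (j : ℕ)))) (x i)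

/-- `(A, Φ)` (with `A` synchronizing and core) is a support of the shift automorphism `φ`. -/
def IsSupport {Q : Type*} (n : ℕ) (π : Fin n → Q → Q) (Φ : DigraphAut n π)
    (φ : (ℕ → Fin n) ≃ₜ (ℕ → Fin n)) : Prop :=
  ∃ (k : ℕ) (s : List (Fin n) → Q), SyncAtLevelWith π k s ∧ CoreAt s k ∧
    inducedMap k s Φ.lab = ⇑φ

/-- The permutation automorphism of the shift induced by a permutation of `Fin n`. -/
def permAutMap {n : ℕ} (ρ : Equiv.Perm (Fin n)) : (ℕ → Fin n) → (ℕ → Fin n) :=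
  fun x i => ρ (x i)

/-- `t` is heavy for `(A, Φ, N)` with divisibility constant `b`. -/
def Heavy {Q : Type*} {n : ℕ} (π : Fin n → Q → Q) (Φ : DigraphAut n π)
    (N b : ℕ) (t : Q) : Prop :=
  b ∣ N ∧ b ≠ N ∧ (∀ r : ℕ, HasOrbitLen (⇑Φ.α) t r → r ∣ b) ∧
  ∀ (q : Q) (x : Fin n), π x q = t →
    ∀ L : ℕ, HasOrbitLen (edgeMap Φ) (q, x) L → Nat.lcm L b = N

section AuxCHL

variable {n : ℕ}

lemma shift_iter_apply (m : ℕ) (x : ℕ → Fin n) (i : ℕ) :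
    (shiftMap n)^[m] x i = x (i + m) := by
  induction m generalizing x i with
  | zero => simp
  | succ m ih =>
    rw [Function.iterate_succ_apply, ih]
    show x (i + m + 1) = x (i + (m + 1))
    rw [Nat.add_assoc]

lemma local_rule_exists (g : (ℕ → Fin n) → Fin n) (hg : Continuous g) :
    ∃ k : ℕ, ∀ y z : ℕ → Fin n, (∀ t < k, y t = z t) → g y = g z := by
  have key : ∀ x : ℕ → Fin n, ∃ kx : ℕ,
      ∀ z, (∀ t < kx, z t = x t) → g z = g x := by
    intro x
    have hopen : IsOpen {z : ℕ → Fin n | g z = g x} := by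
      have h1 : {z : ℕ → Fin n | g z = g x} = g ⁻¹' {g x} := rfl
      rw [h1]
      exact hg.isOpen_preimage _ (isOpen_discrete _)
    rw [isOpen_pi_iff] at hopen
    obtain ⟨I, u, hu, hsub⟩ := hopen x rfl
    refine ⟨(I.sup id) + 1, fun z hz => ?_⟩
    apply hsub
    intro i hi
    have hle : i ≤ I.sup id := Finset.le_sup (f := id) hi
    have : z i = x i := hz i (by omega)
    rw [this]
    exact (hu i hi).2
  choose kx hkx using key
  have hcov : (Set.univ : Set (ℕ → Fin n)) ⊆
      ⋃ x : ℕ → Fin n, {z | ∀ t < kx x, z t = x t} := by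
    intro y _
    exact Set.mem_iUnion.2 ⟨y, fun t _ => rfl⟩
  obtain ⟨S, hS⟩ := isCompact_univ.elim_finite_subcover
    (fun x : ℕ → Fin n => {z : ℕ → Fin n | ∀ t < kx x, z t = x t})
    (fun x => by
      show IsOpen {z : ℕ → Fin n | ∀ t < kx x, z t = x t}
      have h1 : {z : ℕ → Fin n | ∀ t < kx x, z t = x t} =
          ⋂ t ∈ Finset.range (kx x), (fun z : ℕ → Fin n => z t) ⁻¹' {x t} := by
        ext z
        simp
      rw [h1]
      exact isOpen_biInter_finset fun t _ =>
        (continuous_apply t).isOpen_preimage _ (isOpen_discrete _))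
    hcov
  refine ⟨S.sup kx, fun y z hyz => ?_⟩
  have hy := hS (Set.mem_univ y)
  simp only [Set.mem_iUnion, Set.mem_setOf_eq] at hy
  obtain ⟨x0, hx0S, hyx0⟩ := hy
  have hzx0 : ∀ t < kx x0, z t = x0 t := by
    intro t ht
    rw [← hyz t (lt_of_lt_of_le ht (Finset.le_sup hx0S))]
    exact hyx0 t ht
  rw [hkx x0 y hyx0, hkx x0 z hzx0]

lemma block_rule_exists (F : (ℕ → Fin n) → (ℕ → Fin n)) (hF : Continuous F)
    (hcomm : ∀ x, F (shiftMap n x) = shiftMap n (F x)) :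
    ∃ k : ℕ, 0 < k ∧ ∀ (y z : ℕ → Fin n) (m m' : ℕ),
      (∀ t < k, y (m + t) = z (m' + t)) → F y m = F z m' := by
  have hg : Continuous fun y : ℕ → Fin n => F y 0 := (continuous_apply 0).comp hF
  obtain ⟨k0, hk0⟩ := local_rule_exists _ hg
  have hsemi : ∀ (m : ℕ) (x : ℕ → Fin n),
      F ((shiftMap n)^[m] x) = (shiftMap n)^[m] (F x) := by
    intro m
    induction m with
    | zero => intro x; simp
    | succ m ih =>
      intro x
      rw [Function.iterate_succ_apply, ih (shiftMap n x), hcomm x,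
        ← Function.iterate_succ_apply]
  have hFm : ∀ (y : ℕ → Fin n) (m : ℕ), F y m = F ((shiftMap n)^[m] y) 0 := by
    intro y m
    rw [hsemi m y, shift_iter_apply, Nat.zero_add]
  refine ⟨k0 + 1, Nat.succ_pos _, fun y z m m' h => ?_⟩
  rw [hFm y m, hFm z m']
  apply hk0
  intro t ht
  rw [shift_iter_apply, shift_iter_apply]
  have h1 := h t (by omega)
  rw [Nat.add_comm t m, Nat.add_comm t m']
  exact h1

lemma periodize_eq {x : ℕ → Fin n} {i p k : ℕ} (hp : 0 < p)
    (hij : ∀ u < k, x (i + u) = x (i + p + u)) :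
    ∀ a, a < p + k → x (i + a % p) = x (i + a) := by
  intro a
  induction a using Nat.strong_induction_on with
  | _ a ih =>
    intro ha
    rcases lt_or_ge a p with h | h
    · rw [Nat.mod_eq_of_lt h]
    · have h1 : a - p < k := by omega
      have h2 : x (i + (a - p)) = x (i + a) := by
        have h3 := hij (a - p) h1
        rwa [show i + p + (a - p) = i + a by omega] at h3
      have h3 := ih (a - p) (by omega) (by omega)
      have h4 : (a - p) % p = a % p := by
        conv_rhs => rw [show a = (a - p) + p by omega]
        rw [Nat.add_mod_right]
      rw [← h2, ← h3, h4]

end AuxCHL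

theorem all_points_orbit_len_iff_periodic_points_orbit_len
    (n N : ℕ) (hn : 2 ≤ n) (hN : 0 < N) (hdvd : N ∣ n)
    (φ : (ℕ → Fin n) ≃ₜ (ℕ → Fin n)) (hφ : IsShiftAut n φ)
    (hfin : FiniteOrderAut n φ) :
    (∀ x : ℕ → Fin n, HasOrbitLen (⇑φ) x N) ↔
      (∀ x : ℕ → Fin n, (∃ p : ℕ, 0 < p ∧ (shiftMap n)^[p] x = x) →
        HasOrbitLen (⇑φ) x N) := by
  constructor
  · intro h x _
    exact h x
  · intro hper x
    have hc : ∀ y, ⇑φ (shiftMap n y) = shiftMap n (⇑φ y) := fun y => congrFun hφ y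
    have hciter : ∀ (L : ℕ) (y : ℕ → Fin n),
        (⇑φ)^[L] (shiftMap n y) = shiftMap n ((⇑φ)^[L] y) := by
      intro L
      induction L with
      | zero => intro y; simp
      | succ L ih =>
        intro y
        rw [Function.iterate_succ_apply', Function.iterate_succ_apply', ih y, hc]
    have hrule : ∀ L : ℕ, ∃ k, 0 < k ∧ ∀ (y z : ℕ → Fin n) (m m' : ℕ),
        (∀ t < k, y (m + t) = z (m' + t)) → (⇑φ)^[L] y m = (⇑φ)^[L] z m' := by
      intro L
      exact block_rule_exists _ (φ.continuous.iterate L) (hciter L)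
    have hNfix : (⇑φ)^[N] x = x := by
      obtain ⟨k, hk, hr⟩ := hrule N
      funext i
      set m := i + k with hm
      have hm0 : 0 < m := by omega
      set y : ℕ → Fin n := fun t => x (t % m) with hy
      have hyper : (shiftMap n)^[m] y = y := by
        funext t
        rw [shift_iter_apply]
        simp only [hy]
        rw [Nat.add_mod_right]
      have hylen := hper y ⟨m, hm0, hyper⟩
      have hyfix : (⇑φ)^[N] y = y := hylen.1.2
      have h1 : (⇑φ)^[N] x i = (⇑φ)^[N] y i := by
        apply hr
        intro t ht
        show x (i + t) = x ((i + t) % m)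
        rw [Nat.mod_eq_of_lt (by omega)]
      rw [h1, hyfix]
      show x (i % m) = x i
      rw [Nat.mod_eq_of_lt (by omega)]
    have hlow : ∀ L, 0 < L → (⇑φ)^[L] x = x → N ≤ L := by
      intro L hL hfixL
      obtain ⟨k, hk, hr⟩ := hrule L
      obtain ⟨i, j, hijlt, heqw⟩ : ∃ i j : ℕ, i < j ∧ ∀ t < k, x (i + t) = x (j + t) := by
        obtain ⟨a, b, hne, heq⟩ :=
          Finite.exists_ne_map_eq_of_infinite (fun (i : ℕ) (t : Fin k) => x (i + t))
        have heq' : ∀ t < k, x (a + t) = x (b + t) := fun t ht => congrFun heq ⟨t, ht⟩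
        rcases Nat.lt_or_ge a b with h | h
        · exact ⟨a, b, h, heq'⟩
        · exact ⟨b, a, by omega, fun t ht => (heq' t ht).symm⟩
      set p := j - i with hpdef
      have hp0 : 0 < p := by omega
      have hij' : ∀ u < k, x (i + u) = x (i + p + u) := by
        intro u hu
        rw [show i + p + u = j + u by omega]
        exact heqw u hu
      set y : ℕ → Fin n := fun m => x (i + m % p) with hy
      have hyper : (shiftMap n)^[p] y = y := by
        funext t
        rw [shift_iter_apply]
        simp only [hy]
        rw [Nat.add_mod_right]
      have hyfix : (⇑φ)^[L] y = y := by
        funext m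
        have h1 : (⇑φ)^[L] y m = (⇑φ)^[L] x (i + m % p) := by
          apply hr
          intro t ht
          show x (i + (m + t) % p) = x (i + m % p + t)
          rw [← Nat.mod_add_mod]
          have hmp : m % p < p := Nat.mod_lt m hp0
          rw [periodize_eq hp0 hij' (m % p + t) (by omega)]
          rw [Nat.add_assoc]
        rw [h1, congrFun hfixL (i + m % p)]
      have hylen := hper y ⟨p, hp0, hyper⟩
      exact hylen.2 ⟨hL, hyfix⟩
    exact ⟨⟨hN, hNfix⟩, fun L hL => hlow L hL.1 hL.2⟩
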